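/- There exists n₀ such that for every n ≥ n₀, if G is a T⃗₃-free oriented graph on n vertices that maximizes the number of induced copies of P⃗₄ among all T⃗₃-free oriented graphs on n vertices, then every vertex x of G is contained in at least 0.19·C(n,3) induced copies of P⃗₄. -/

import Mathlib

/-!
Blowing up the directed 5-cycle into five near-equal parts gives a `T⃗₃`-free oriented graph
with `5 (n/5)^4` induced copies of `P⃗₄`, so an extremal graph has at least that many, and by
averaging some vertex `v` lies in at least a `4/n` fraction of them. Replacing any other vertex
`x` by a clone of `v` keeps the graph oriented and `T⃗₃`-free; it destroys only the copies
through `x` and creates a new copy from every copy through `v` avoiding `x`, of which there are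
at least `p(v) - C(n,2)`. Maximality therefore gives `p(x) ≥ p(v) - C(n,2)`, and
`20 (n/5)^4 / n - n^2/2 ≥ 0.19·C(n,3)` for large `n`.
-/

open scoped Classical

/-- An oriented graph: the arc relation has no loops and no 2-cycles. -/
def IsOriented {V : Type*} (A : V → V → Prop) : Prop :=
  ∀ a b : V, A a b → ¬ A b a

/-- `T⃗₃`-freeness: no three vertices span the arcs a→b, b→c, a→c. -/
def T3Free {V : Type*} (A : V → V → Prop) : Prop :=
  ∀ a b c : V, ¬ (A a b ∧ A b c ∧ A a c)

/-- `S` is the vertex set of an induced copy of the directed path `P⃗ₖ` in the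
oriented graph with arc relation `A`. -/
def IsInducedPath {V : Type*} (A : V → V → Prop) (k : ℕ) (S : Finset V) : Prop :=
  ∃ f : Fin k → V, Function.Injective f ∧ (∀ v : V, v ∈ S ↔ ∃ i, f i = v) ∧
    ∀ i j : Fin k, A (f i) (f j) ↔ (j : ℕ) = (i : ℕ) + 1

/-- The number of induced copies of `P⃗ₖ`. -/
noncomputable def numPaths {V : Type*} [Fintype V] [DecidableEq V]
    (A : V → V → Prop) (k : ℕ) : ℕ :=
  (Finset.univ.filter fun S : Finset V => IsInducedPath A k S).card

/-- The number of induced copies of `P⃗ₖ` containing all vertices of `T`. -/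
noncomputable def numPathsThrough {V : Type*} [Fintype V] [DecidableEq V]
    (A : V → V → Prop) (k : ℕ) (T : Finset V) : ℕ :=
  (Finset.univ.filter fun S : Finset V => IsInducedPath A k S ∧ T ⊆ S).card

/-- The density of induced copies of `P⃗ₖ`. -/
noncomputable def pathDensity {V : Type*} [Fintype V] [DecidableEq V]
    (A : V → V → Prop) (k : ℕ) : ℝ :=
  (numPaths A k : ℝ) / ((Fintype.card V).choose k : ℝ)

/-- The maximum density of induced copies of `P⃗ₖ` over all `T⃗₃`-free oriented
graphs on `n` vertices. -/
noncomputable def maxDensityT3 (k n : ℕ) : ℝ :=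
  sSup {d : ℝ | ∃ A : Fin n → Fin n → Prop, IsOriented A ∧ T3Free A ∧ d = pathDensity A k}

/-- The maximum density of induced copies of `P⃗ₖ` over all oriented graphs on `n`
vertices. -/
noncomputable def maxDensityAll (k n : ℕ) : ℝ :=
  sSup {d : ℝ | ∃ A : Fin n → Fin n → Prop, IsOriented A ∧ d = pathDensity A k}

/-- `S` is the vertex set of an induced copy of the oriented graph `H` in the
oriented graph with arc relation `A`. -/
def IsInducedCopy {V W : Type*} (H : W → W → Prop) (A : V → V → Prop) (S : Finset V) : Prop :=
  ∃ f : W → V, Function.Injective f ∧ (∀ v : V, v ∈ S ↔ ∃ w, f w = v) ∧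
    ∀ a b : W, A (f a) (f b) ↔ H a b

/-- The number of induced copies of `H` in `A`. -/
noncomputable def numCopies {V W : Type*} [Fintype V] [DecidableEq V]
    (H : W → W → Prop) (A : V → V → Prop) : ℕ :=
  (Finset.univ.filter fun S : Finset V => IsInducedCopy H A S).card

/-- The number of (unordered) pairs of vertices on which the two oriented graphs `A`
and `B` differ (an arc must be added, removed, or reoriented). -/
noncomputable def pairDiff {V : Type*} [Fintype V] [LinearOrder V]
    (A B : V → V → Prop) : ℕ :=
  (Finset.univ.filter fun p : V × V => p.1 < p.2 ∧
    ¬ ((A p.1 p.2 ↔ B p.1 p.2) ∧ (A p.2 p.1 ↔ B p.2 p.1))).card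

/-- `A` is a blow-up of the directed 5-cycle with parts given by the fibers of `g`. -/
def IsBlowupC5 {V : Type*} (A : V → V → Prop) (g : V → Fin 5) : Prop :=
  ∀ u v : V, A u v ↔ g v = g u + 1

/-- The size of the part of vertices mapped to `i`. -/
noncomputable def partSize {V : Type*} [Fintype V] {m : ℕ} (g : V → Fin m) (i : Fin m) : ℕ :=
  (Finset.univ.filter fun v : V => g v = i).card

/-- `A` is a balanced blow-up of the directed 5-cycle, i.e. isomorphic to `C⃗₅(n)`. -/
def IsBalancedBlowupC5 {V : Type*} [Fintype V] (A : V → V → Prop) : Prop :=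
  ∃ g : V → Fin 5, IsBlowupC5 A g ∧
    ∀ i j : Fin 5, (partSize g i : ℤ) - (partSize g j : ℤ) ≤ 1

section Comap

variable {V W : Type*} {A : V → V → Prop}

theorem IsOriented.comap (hA : IsOriented A) (r : W → V) :
    IsOriented fun a b => A (r a) (r b) :=
  fun a b => hA (r a) (r b)

theorem T3Free.comap (hA : T3Free A) (r : W → V) : T3Free fun a b => A (r a) (r b) :=
  fun a b c => hA (r a) (r b) (r c)

end Comap

namespace IsInducedPath

variable {V W : Type*} {A : V → V → Prop} {k : ℕ} {S : Finset V}

theorem card_eq [DecidableEq V] (h : IsInducedPath A k S) : S.card = k := by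
  obtain ⟨f, hf, hS, -⟩ := h
  have : S = Finset.univ.image f := by
    ext v
    simp [hS]
  rw [this, Finset.card_image_of_injective _ hf, Finset.card_fin]

theorem map {B : W → W → Prop} (h : IsInducedPath A k S) (e : V ↪ W)
    (he : ∀ a ∈ S, ∀ b ∈ S, B (e a) (e b) ↔ A a b) : IsInducedPath B k (S.map e) := by
  obtain ⟨f, hf, hS, hA⟩ := h
  have hfS : ∀ i, f i ∈ S := fun i => (hS _).2 ⟨i, rfl⟩
  refine ⟨e ∘ f, e.injective.comp hf, fun w => ?_, fun i j => ?_⟩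
  · simp only [Finset.mem_map, hS, Function.comp_apply]
    constructor
    · rintro ⟨_, ⟨i, rfl⟩, rfl⟩
      exact ⟨i, rfl⟩
    · rintro ⟨i, rfl⟩
      exact ⟨f i, ⟨i, rfl⟩, rfl⟩
  · exact (he _ (hfS i) _ (hfS j)).trans (hA i j)

end IsInducedPath

section Counting

variable {V W : Type*} [Fintype V] [DecidableEq V] (A : V → V → Prop) (k : ℕ)

theorem numPathsThrough_empty : numPathsThrough A k ∅ = numPaths A k := by
  simp [numPathsThrough, numPaths]

theorem sum_numPathsThrough_singleton :
    ∑ x : V, numPathsThrough A k {x} = k * numPaths A k := by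
  simp only [numPathsThrough, Finset.singleton_subset_iff, ← Finset.filter_filter,
    Finset.card_filter]
  rw [Finset.sum_comm, numPaths, Finset.card_eq_sum_ones, Finset.mul_sum]
  refine Finset.sum_congr rfl fun S hS => ?_
  rw [← Finset.card_filter, Finset.filter_mem_eq_inter, Finset.univ_inter,
    (Finset.mem_filter.1 hS).2.card_eq, mul_one]

theorem exists_mul_numPaths_le [Nonempty V] :
    ∃ v : V, k * numPaths A k ≤ Fintype.card V * numPathsThrough A k {v} := by
  obtain ⟨v, -, hv⟩ := Finset.exists_le_of_sum_le Finset.univ_nonempty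
    (f := fun _ : V => k * numPaths A k) (g := fun v => Fintype.card V * numPathsThrough A k {v})
    (by rw [Finset.sum_const, ← Finset.mul_sum, sum_numPathsThrough_singleton,
      Finset.card_univ, smul_eq_mul])
  exact ⟨v, hv⟩

theorem numPathsThrough_le_choose (T : Finset V) :
    numPathsThrough A k T ≤ (Fintype.card V).choose (k - T.card) := by
  rw [← Finset.card_univ, ← Finset.card_powersetCard]
  refine Finset.card_le_card_of_injOn (· \ T) (fun S hS => ?_) fun S₁ hS₁ S₂ hS₂ h => ?_
  · obtain ⟨-, hpath, hT⟩ := Finset.mem_filter.1 hS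
    simp [Finset.card_sdiff_of_subset hT, hpath.card_eq]
  · rw [← Finset.sdiff_union_of_subset (Finset.mem_filter.1 hS₁).2.2,
      ← Finset.sdiff_union_of_subset (Finset.mem_filter.1 hS₂).2.2]
    exact congrArg (· ∪ T) h

theorem card_filter_notMem_add_numPathsThrough_insert (T : Finset V) (x : V) :
    ((Finset.univ.filter fun S : Finset V => IsInducedPath A k S ∧ T ⊆ S).filter
        (x ∉ ·)).card + numPathsThrough A k (insert x T) = numPathsThrough A k T := by
  have hx :
      (Finset.univ.filter fun S : Finset V => IsInducedPath A k S ∧ T ⊆ S).filter (x ∈ ·) =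
        Finset.univ.filter fun S => IsInducedPath A k S ∧ insert x T ⊆ S := by
    ext S
    simp only [Finset.mem_filter, Finset.mem_univ, true_and, Finset.insert_subset_iff]
    tauto
  rw [numPathsThrough, numPathsThrough, ← hx, add_comm]
  exact Finset.card_filter_add_card_filter_not _

theorem numPaths_comap_le [Fintype W] [DecidableEq W] (e : W ↪ V) :
    numPaths (fun a b => A (e a) (e b)) k ≤ numPaths A k :=
  Finset.card_le_card_of_injOn (Finset.map e)
    (fun S hS => by simpa using (Finset.mem_filter.1 hS).2.map e fun _ _ _ _ => Iff.rfl)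
    (Finset.map_injective e).injOn

end Counting

section Clone

variable {V : Type*} [DecidableEq V]

def replaceByClone (A : V → V → Prop) (x v : V) : V → V → Prop :=
  fun a b => A (Function.update id x v a) (Function.update id x v b)

theorem IsInducedPath.map_replaceByClone {A : V → V → Prop} {k : ℕ} {x v : V} {S : Finset V}
    (h : IsInducedPath A k S) (hx : x ∉ S) (e : V ↪ V)
    (he : ∀ a ≠ x, Function.update id x v (e a) = a) :
    IsInducedPath (replaceByClone A x v) k (S.map e) :=
  h.map e fun a ha b hb => by
    rw [replaceByClone, he a (ne_of_mem_of_not_mem ha hx), he b (ne_of_mem_of_not_mem hb hx)]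

theorem update_id_swap_apply {x v a : V} (ha : a ≠ x) :
    Function.update id x v (Equiv.swap v x a) = a := by
  by_cases hav : a = v
  · subst hav
    simp
  · rw [Equiv.swap_apply_of_ne_of_ne hav ha, Function.update_of_ne ha, id]

variable [Fintype V]

theorem numPaths_add_numPathsThrough_le_replaceByClone (A : V → V → Prop) (k : ℕ) (x v : V) :
    numPaths A k + numPathsThrough A k {v} ≤
      numPaths (replaceByClone A x v) k + numPathsThrough A k {x} +
        numPathsThrough A k {x, v} := by
  set avoiding := fun T : Finset V =>
    (Finset.univ.filter fun S : Finset V => IsInducedPath A k S ∧ T ⊆ S).filter (x ∉ ·)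
  have h₀ : (avoiding ∅).card + numPathsThrough A k {x} = numPaths A k := by
    rw [← numPathsThrough_empty A k, ← Finset.insert_empty]
    exact card_filter_notMem_add_numPathsThrough_insert A k ∅ x
  have h₁ : (avoiding {v}).card + numPathsThrough A k {x, v} = numPathsThrough A k {v} :=
    card_filter_notMem_add_numPathsThrough_insert A k {v} x
  have hmem : ∀ {T S}, S ∈ avoiding T → IsInducedPath A k S ∧ T ⊆ S ∧ x ∉ S := by
    intro T S hS
    simpa [avoiding, and_assoc] using hS
  have hswap : ∀ S ∈ avoiding {v}, x ∈ S.map (Equiv.swap v x).toEmbedding := fun S hS =>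
    Finset.mem_map_equiv.2 (by simpa using (hmem hS).2.1)
  -- Copies avoiding `x` survive; swapping `v` and `x` in a copy through `v` gives one through `x`.
  have hcard : (avoiding ∅).card + (avoiding {v}).card ≤ numPaths (replaceByClone A x v) k := by
    rw [← Finset.card_image_of_injective (avoiding {v})
      (Finset.map_injective (Equiv.swap v x).toEmbedding), ← Finset.card_union_of_disjoint]
    · refine Finset.card_le_card fun S hS => Finset.mem_filter.2 ⟨Finset.mem_univ _, ?_⟩
      rcases Finset.mem_union.1 hS with hS | hS
      · obtain ⟨hpath, -, hx⟩ := hmem hS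
        simpa using hpath.map_replaceByClone hx (Function.Embedding.refl V)
          fun a ha => Function.update_of_ne ha _ _
      · obtain ⟨T, hT, rfl⟩ := Finset.mem_image.1 hS
        obtain ⟨hpath, -, hx⟩ := hmem hT
        exact hpath.map_replaceByClone hx _ fun a ha => update_id_swap_apply ha
    · refine Finset.disjoint_left.2 fun S hS hS' => (hmem hS).2.2 ?_
      obtain ⟨T, hT, rfl⟩ := Finset.mem_image.1 hS'
      exact hswap T hT
  omega

end Clone

theorem numPathsThrough_le_add_choose_of_forall_le {V : Type*} [Fintype V] [DecidableEq V]
    {A : V → V → Prop} {k : ℕ} (hA : IsOriented A) (hT : T3Free A)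
    (hmax : ∀ B : V → V → Prop, IsOriented B → T3Free B → numPaths B k ≤ numPaths A k)
    (v x : V) :
    numPathsThrough A k {v} ≤ numPathsThrough A k {x} + (Fintype.card V).choose (k - 2) := by
  rcases eq_or_ne x v with rfl | hxv
  · exact Nat.le_add_right _ _
  have hclone := numPaths_add_numPathsThrough_le_replaceByClone A k x v
  have hle := hmax (replaceByClone A x v) (hA.comap _) (hT.comap _)
  have hpair := numPathsThrough_le_choose A k {x, v}
  rw [Finset.card_pair hxv] at hpair
  omega

def cycleFive : Fin 5 → Fin 5 → Prop := fun a b => b = a + 1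

theorem isOriented_cycleFive : IsOriented cycleFive := by
  unfold IsOriented cycleFive
  decide

theorem t3Free_cycleFive : T3Free cycleFive := by
  unfold T3Free cycleFive
  decide

theorem five_mul_pow_four_le_numPaths_blowup (m : ℕ) :
    5 * m ^ 4 ≤ numPaths (fun p q : Fin 5 × Fin m => cycleFive p.1 q.1) 4 := by
  set walk : Fin 5 × (Fin 4 → Fin m) → Fin 4 → Fin 5 × Fin m :=
    fun z k => (z.1 + k.castSucc, z.2 k)
  have hfst_inj : ∀ (i : Fin 5) {k l : Fin 4}, i + k.castSucc = i + l.castSucc → k = l :=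
    fun i k l h => Fin.castSucc_injective _ (add_left_cancel h)
  have harc : ∀ (i : Fin 5) (k l : Fin 4),
      cycleFive (i + k.castSucc) (i + l.castSucc) ↔ (l : ℕ) = k + 1 := by
    unfold cycleFive
    decide
  have hstart : ∀ i j : Fin 5, Finset.univ.image (fun k : Fin 4 => i + k.castSucc) =
      Finset.univ.image (fun k : Fin 4 => j + k.castSucc) → i = j := by
    decide
  have hcard : Fintype.card (Fin 5 × (Fin 4 → Fin m)) = 5 * m ^ 4 := by simp
  rw [← hcard, ← Finset.card_univ]
  refine Finset.card_le_card_of_injOn (fun z => Finset.univ.image (walk z)) (fun z _ => ?_) ?_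
  · refine Finset.mem_filter.2 ⟨Finset.mem_univ _, walk z, fun k l h => ?_, by simp, harc z.1⟩
    exact hfst_inj z.1 (congrArg Prod.fst h)
  · rintro ⟨i, c⟩ - ⟨j, d⟩ - h
    simp only at h
    have hfst := congrArg (Finset.image Prod.fst) h
    simp only [Finset.image_image, walk] at hfst
    obtain rfl : i = j := hstart i j hfst
    refine Prod.ext rfl (funext fun k => ?_)
    obtain ⟨l, -, hl⟩ := Finset.mem_image.1 (h ▸ Finset.mem_image_of_mem (walk (i, c))
      (Finset.mem_univ k))
    obtain ⟨hkl, hcd⟩ := Prod.mk.inj hl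
    rw [← hcd, hfst_inj i hkl]

theorem exists_five_mul_pow_four_le_numPaths (n : ℕ) :
    ∃ A : Fin n → Fin n → Prop, IsOriented A ∧ T3Free A ∧
      5 * (n / 5) ^ 4 ≤ numPaths A 4 := by
  set g : Fin n → Fin 5 := fun a => ⟨a % 5, Nat.mod_lt _ (by norm_num)⟩
  set e : Fin 5 × Fin (n / 5) ↪ Fin n :=
    ⟨fun p => ⟨p.2 * 5 + p.1, by omega⟩, fun p q h => by
      have := Fin.val_eq_of_eq h
      simp only at this
      exact Prod.ext (Fin.ext (by omega)) (Fin.ext (by omega))⟩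
  have hge : ∀ p, g (e p) = p.1 := fun p =>
    Fin.ext (show ((p.2 : ℕ) * 5 + p.1) % 5 = p.1 by omega)
  refine ⟨fun a b => cycleFive (g a) (g b), isOriented_cycleFive.comap g,
    t3Free_cycleFive.comap g, ?_⟩
  refine (five_mul_pow_four_le_numPaths_blowup (n / 5)).trans ?_
  simpa only [hge] using numPaths_comap_le (fun a b => cycleFive (g a) (g b)) 4 e

theorem nineteen_div_hundred_mul_choose_three_le {n m N p q : ℕ} (hn : 10000 ≤ n)
    (hm : n ≤ 5 * m + 4) (hN : 5 * m ^ 4 ≤ N) (hp : 4 * N ≤ n * p)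
    (hpq : p ≤ q + n.choose 2) : (0.19 : ℝ) * n.choose 3 ≤ q := by
  have hn' : (10000 : ℝ) ≤ n := by exact_mod_cast hn
  have hm' : (n : ℝ) - 4 ≤ 5 * m := by
    have : (n : ℝ) ≤ 5 * m + 4 := by exact_mod_cast hm
    linarith
  have hN' : (5 : ℝ) * m ^ 4 ≤ N := by exact_mod_cast hN
  have hp' : (4 : ℝ) * N ≤ n * p := by exact_mod_cast hp
  have hpq' : (p : ℝ) ≤ q + n.choose 2 := by exact_mod_cast hpq
  have hc2 : (n.choose 2 : ℝ) ≤ n ^ 2 / 2 := by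
    simpa using Nat.choose_le_pow_div (α := ℝ) 2 n
  have hc3 : (n.choose 3 : ℝ) ≤ n ^ 3 / 6 := by
    simpa [Nat.factorial] using Nat.choose_le_pow_div (α := ℝ) 3 n
  have hpow : ((n : ℝ) - 4) ^ 4 ≤ 625 * m ^ 4 := by
    have := pow_le_pow_left₀ (by linarith) hm' 4
    linarith
  have hnq : (19 / 600 : ℝ) * n ^ 4 ≤ n * q := by
    have hpoly : (19 / 600 : ℝ) * n ^ 4 + n ^ 3 / 2 ≤ 4 / 125 * ((n : ℝ) - 4) ^ 4 := by
      nlinarith [pow_le_pow_left₀ (by norm_num) hn' 3, mul_le_mul_of_nonneg_left hn'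
        (pow_nonneg (by linarith : (0 : ℝ) ≤ n) 3)]
    nlinarith [mul_le_mul_of_nonneg_left hc2 (by linarith : (0 : ℝ) ≤ n)]
  have hq : (19 / 600 : ℝ) * n ^ 3 ≤ q := by
    have hn0 : (0 : ℝ) < n := by linarith
    nlinarith
  linarith

/-- For all sufficiently large `n`, in any `T⃗₃`-free oriented graph
on `n` vertices maximizing the number of induced copies of `P⃗₄` among `T⃗₃`-free
oriented graphs on `n` vertices, every vertex lies in at least `0.19·C(n,3)` induced
copies of `P⃗₄`. -/
theorem extremal_vertex_many_paths :
    ∃ n₀ : ℕ, ∀ n : ℕ, n₀ ≤ n →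
      ∀ A : Fin n → Fin n → Prop, IsOriented A → T3Free A →
        (∀ B : Fin n → Fin n → Prop, IsOriented B → T3Free B →
          numPaths B 4 ≤ numPaths A 4) →
        ∀ x : Fin n, (0.19 : ℝ) * (n.choose 3 : ℝ) ≤ (numPathsThrough A 4 {x} : ℝ) := by
  refine ⟨10000, fun n hn A hA hT hmax x => ?_⟩
  have : Nonempty (Fin n) := ⟨⟨0, by omega⟩⟩
  obtain ⟨A₀, hA₀, hT₀, hA₀paths⟩ := exists_five_mul_pow_four_le_numPaths n
  obtain ⟨v, hv⟩ := exists_mul_numPaths_le A 4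
  have hvx := numPathsThrough_le_add_choose_of_forall_le hA hT hmax v x
  rw [Fintype.card_fin] at hv hvx
  exact nineteen_div_hundred_mul_choose_three_le hn (by omega)
    (hA₀paths.trans (hmax A₀ hA₀ hT₀)) hv hvx
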